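/- Let S be a d-dimensional simplex in ℝ^d with centroid at the origin, and let u, w ∈ S ∩ ℤ^d with u ≠ w. Then there exists an index k ∈ {1, …, d+1} such that β_S(u)_k − β_S(w)_k ≥ λ₁(S)/(d+1), where β_S(x) denotes the vector of barycentric coordinates of x with respect to the vertices of S and λ₁(S) is the first successive minimum of S. -/

import Mathlib

open MeasureTheory Set Pointwise

/-!
An affine map permuting the vertices of a simplex maps it onto itself, so its linear part has
determinant `±1` and, by the change of variables formula, it fixes the centroid. A point fixed
by all vertex permutations has equal barycentric coordinates, so a simplex with centroid `0` has
vertices summing to `0`. Then with `δ = β(u) - β(w)`, a nonzero vector with zero sum and maximum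
`m > 0`, the lattice point `w - u = ∑ⱼ (m - δⱼ) vⱼ` is a nonnegative combination of the vertices
of total weight `(d + 1) m`, hence lies in `(d + 1) m • S`, and so `λ₁(S) ≤ (d + 1) m`.
-/

theorem ContinuousAffineMap.average_comp {α E F : Type*} [MeasurableSpace α] {μ : Measure α}
    [IsFiniteMeasure μ] [NeZero μ]
    [NormedAddCommGroup E] [NormedSpace ℝ E] [CompleteSpace E]
    [NormedAddCommGroup F] [NormedSpace ℝ F] [CompleteSpace F]
    (T : E →ᴬ[ℝ] F) {f : α → E} (hf : Integrable f μ) :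
    ⨍ x, T (f x) ∂μ = T (⨍ x, f x ∂μ) := by
  rw [T.decomp]
  simp only [Pi.add_apply, Function.const_apply, average_eq]
  rw [integral_add (T.contLinear.integrable_comp hf) (integrable_const _), integral_const,
    T.contLinear.integral_comp_comm hf, map_smul, smul_add, smul_smul,
    inv_mul_cancel₀ measureReal_univ_ne_zero, one_smul]

theorem ContinuousAffineMap.map_setAverage_eq_of_image_eq {E : Type*} [NormedAddCommGroup E]
    [NormedSpace ℝ E] [FiniteDimensional ℝ E] [MeasurableSpace E] [BorelSpace E]
    (μ : Measure E) [μ.IsAddHaarMeasure] (T : E →ᴬ[ℝ] E) {s : Set E}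
    (hs : IsCompact s) (hs₀ : μ s ≠ 0) (hT : InjOn T s) (hTs : T '' s = s) :
    T (⨍ x in s, x ∂μ) = ⨍ x in s, x ∂μ := by
  have hmeas : MeasurableSet s := hs.isClosed.measurableSet
  have hfin : μ s ≠ ⊤ := hs.measure_lt_top.ne
  have hderiv : ∀ x ∈ s, HasFDerivWithinAt T T.contLinear s x := fun _ _ => T.hasFDerivWithinAt
  have hdet : |T.contLinear.det| = 1 := by
    have h := lintegral_abs_det_fderiv_eq_addHaar_image μ hmeas hderiv hT
    rw [setLIntegral_const, hTs] at h
    rw [← ENNReal.ofReal_eq_one]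
    exact (ENNReal.mul_eq_right hs₀ hfin).mp h
  have hint : ∫ x in s, T x ∂μ = ∫ x in s, x ∂μ := by
    have h := integral_image_eq_integral_abs_det_fderiv_smul μ hmeas hderiv hT fun x => x
    simpa [hTs, hdet] using h.symm
  have : IsFiniteMeasure (μ.restrict s) := isFiniteMeasure_restrict.mpr hfin
  have : NeZero (μ.restrict s) := ⟨by simpa using hs₀⟩
  have hid : IntegrableOn (fun x => x) s μ := continuous_id.continuousOn.integrableOn_compact hs
  rw [← T.average_comp hid, average_eq, average_eq]
  exact congrArg _ hint

namespace AffineBasis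

variable {ι k V P : Type*} [Fintype ι] [AddCommGroup V] [AddTorsor V P]

section Ring

variable [Ring k] [Module k V] (b : AffineBasis ι k P)

noncomputable def permute (σ : Equiv.Perm ι) : P →ᵃ[k] P :=
  (Finset.univ.affineCombination k (b ∘ σ)).comp b.coords

theorem coord_permute_apply (σ : Equiv.Perm ι) (i : ι) (q : P) :
    b.coord (σ i) (b.permute σ q) = b.coord i q := by
  have h := (b.reindex σ.symm).coord_apply_combination_of_mem (Finset.mem_univ i)
    (b.sum_coord_apply_eq_one q)
  simp only [coord_reindex, coe_reindex, Equiv.symm_symm] at h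
  exact h

theorem permute_injective (σ : Equiv.Perm ι) : Function.Injective (b.permute σ) := by
  intro q₁ q₂ h
  refine b.ext_elem fun i => ?_
  rw [← b.coord_permute_apply σ, h, b.coord_permute_apply]

theorem permute_apply_self [DecidableEq ι] (σ : Equiv.Perm ι) (i : ι) :
    b.permute σ (b i) = b (σ i) := by
  refine b.ext_elem fun j => ?_
  obtain ⟨j, rfl⟩ := σ.surjective j
  simp only [coord_permute_apply, coord_apply, σ.injective.eq_iff]

end Ring

theorem permute_image_convexHull {E : Type*} [AddCommGroup E] [Module ℝ E]
    (b : AffineBasis ι ℝ E) (σ : Equiv.Perm ι) :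
    b.permute σ '' convexHull ℝ (range b) = convexHull ℝ (range b) := by
  classical
  have h : b.permute σ ∘ b = b ∘ σ := funext (b.permute_apply_self σ)
  rw [AffineMap.image_convexHull, ← range_comp, h, EquivLike.range_comp]

theorem eq_centroid_of_forall_permute_apply_eq [DivisionRing k] [CharZero k] [Module k V]
    (b : AffineBasis ι k P) {q : P} (hq : ∀ σ, b.permute σ q = q) :
    q = Finset.univ.centroid k b := by
  classical
  have hconst : ∀ i j, b.coord j q = b.coord i q := fun i j => by
    simpa [hq] using b.coord_permute_apply (Equiv.swap i j) i q
  refine b.ext_elem fun i => ?_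
  have hsum := b.sum_coord_apply_eq_one q
  simp only [hconst i, Finset.sum_const, Finset.card_univ, nsmul_eq_mul] at hsum
  rw [coord_apply_centroid b (Finset.mem_univ i), Finset.card_univ,
    eq_inv_of_mul_eq_one_right hsum]

theorem setAverage_convexHull_eq_centroid {E : Type*} [NormedAddCommGroup E] [NormedSpace ℝ E]
    [FiniteDimensional ℝ E] [MeasurableSpace E] [BorelSpace E] (μ : Measure E) [μ.IsAddHaarMeasure]
    (b : AffineBasis ι ℝ E) :
    ⨍ x in convexHull ℝ (range b), x ∂μ = Finset.univ.centroid ℝ b := by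
  have hcompact : IsCompact (convexHull ℝ (range b)) :=
    (finite_range b).isCompact_convexHull (𝕜 := ℝ)
  have hpos : μ (convexHull ℝ (range b)) ≠ 0 := by
    obtain ⟨x, hx⟩ := interior_convexHull_nonempty_iff_affineSpan_eq_top.mpr b.tot
    exact (Measure.measure_pos_of_nonempty_interior μ ⟨x, hx⟩).ne'
  refine b.eq_centroid_of_forall_permute_apply_eq fun σ => ?_
  let T : E →ᴬ[ℝ] E := ⟨b.permute σ, (b.permute σ).continuous_of_finiteDimensional⟩
  exact T.map_setAverage_eq_of_image_eq μ hcompact hpos (b.permute_injective σ).injOn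
    (b.permute_image_convexHull σ)

end AffineBasis

theorem sum_smul_mem_smul_convexHull {ι E : Type*} [Fintype ι] [AddCommGroup E] [Module ℝ E]
    (v : ι → E) {c : ι → ℝ} (hc : ∀ i, 0 ≤ c i) (hsum : 0 < ∑ i, c i) :
    ∑ i, c i • v i ∈ (∑ i, c i) • convexHull ℝ (range v) := by
  have h := Finset.univ.centerMass_mem_convexHull (fun i _ => hc i) hsum
    (fun i _ => mem_range_self (f := v) i)
  rw [Finset.centerMass] at h
  simpa [smul_inv_smul₀ hsum.ne'] using smul_mem_smul_set (a := ∑ i, c i) h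

theorem neg_sum_smul_mem_smul_convexHull {ι E : Type*} [Fintype ι] [Nonempty ι]
    [AddCommGroup E] [Module ℝ E] {v : ι → E} (hv : ∑ i, v i = 0) {δ : ι → ℝ}
    (hδ : ∑ i, δ i = 0) {m : ℝ} (hm : ∀ i, δ i ≤ m) (hm₀ : 0 < m) :
    -∑ i, δ i • v i ∈ (Fintype.card ι * m) • convexHull ℝ (range v) := by
  have hweights : ∑ i, (m - δ i) = Fintype.card ι * m := by
    simp [Finset.sum_sub_distrib, hδ]
  have hcomb : ∑ i, (m - δ i) • v i = -∑ i, δ i • v i := by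
    simp [sub_smul, Finset.sum_sub_distrib, ← Finset.smul_sum, hv]
  rw [← hcomb, ← hweights]
  exact sum_smul_mem_smul_convexHull v (fun i => sub_nonneg.mpr (hm i))
    (hweights ▸ by positivity)

theorem Finset.sum_eq_card_smul_univ_centroid {ι E : Type*} [Fintype ι] [Nonempty ι]
    [AddCommGroup E] [Module ℝ E] (v : ι → E) :
    ∑ i, v i = (Fintype.card ι : ℝ) • Finset.univ.centroid ℝ v := by
  simp only [centroid_eq_centerMass _ univ_nonempty, centerMass, centroidWeights,
    Function.const_apply, ← smul_sum, sum_const, card_univ, nsmul_eq_mul, smul_smul]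
  match_scalars
  field_simp

theorem AffineIndependent.sum_eq_zero_of_setAverage_convexHull_eq_zero {n : ℕ}
    {v : Fin (n + 1) → (Fin n → ℝ)} (hv : AffineIndependent ℝ v)
    (h : ⨍ x in convexHull ℝ (range v), x = 0) : ∑ i, v i = 0 := by
  have hspan : affineSpan ℝ (range v) = ⊤ := by
    simp [hv.affineSpan_eq_top_iff_card_eq_finrank_add_one]
  have hcentroid : Finset.univ.centroid ℝ v = 0 :=
    ((AffineBasis.mk v hv hspan).setAverage_convexHull_eq_centroid volume).symm.trans h
  rw [Finset.sum_eq_card_smul_univ_centroid, hcentroid, smul_zero]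

theorem exists_pos_forall_le_of_sum_eq_zero {ι : Type*} [Fintype ι] [Nonempty ι] {δ : ι → ℝ}
    (hδ : ∑ i, δ i = 0) (hne : δ ≠ 0) : ∃ k, 0 < δ k ∧ ∀ i, δ i ≤ δ k := by
  obtain ⟨k, hk⟩ := Finite.exists_max δ
  obtain ⟨i, -, hi⟩ := Finset.exists_pos_of_sum_zero_of_exists_nonzero δ hδ
    (by simpa [funext_iff] using hne)
  exact ⟨k, hi.trans_le (hk i), hk⟩

theorem barycentric_coordinate_gap_general (d : ℕ) (v : Fin (d + 1) → (Fin d → ℝ))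
    (hv : AffineIndependent ℝ v) (S : Set (Fin d → ℝ))
    (hS : S = convexHull ℝ (Set.range v))
    (hcent : (⨍ x in S, x) = (0 : Fin d → ℝ))
    (l1 : ℝ)
    (hl1 : IsLeast {l : ℝ | 0 < l ∧ ∃ z : Fin d → ℤ,
      (fun i => (z i : ℝ)) ≠ 0 ∧ (fun i => (z i : ℝ)) ∈ l • S} l1)
    (β : (Fin d → ℝ) → (Fin (d + 1) → ℝ))
    (hβ : ∀ x : Fin d → ℝ, (∑ i, β x i = 1) ∧ (∑ i, β x i • v i = x))
    (u w : Fin d → ℤ)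
    (huw : u ≠ w) :
    ∃ k : Fin (d + 1),
      l1 / ((d : ℝ) + 1) ≤ β (fun i => (u i : ℝ)) k - β (fun i => (w i : ℝ)) k := by
  subst hS
  have hsum := hv.sum_eq_zero_of_setAverage_convexHull_eq_zero hcent
  set δ := β (fun i => (u i : ℝ)) - β (fun i => (w i : ℝ)) with hδ
  have hδsum : ∑ i, δ i = 0 := by simp [hδ, Finset.sum_sub_distrib, hβ]
  have hδcomb : ∑ i, δ i • v i = -(fun i => ((w - u) i : ℝ)) := by
    simp only [hδ, Pi.sub_apply, sub_smul, Finset.sum_sub_distrib, hβ]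
    ext i
    simp
  have hβne : β (fun i => (u i : ℝ)) ≠ β (fun i => (w i : ℝ)) := fun hβeq => huw <| by
    have hcoe := (hβ fun i => (u i : ℝ)).2
    rw [hβeq, (hβ _).2] at hcoe
    exact funext fun i => by exact_mod_cast congrFun hcoe.symm i
  obtain ⟨k, hδk, hk⟩ := exists_pos_forall_le_of_sum_eq_zero hδsum (sub_ne_zero.mpr hβne)
  have hmem := neg_sum_smul_mem_smul_convexHull hsum hδsum hk hδk
  rw [hδcomb, neg_neg, Fintype.card_fin] at hmem
  have hwu : (fun i => ((w - u) i : ℝ)) ≠ 0 := fun h => huw <| funext fun i => by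
    simpa [sub_eq_zero, eq_comm] using congrFun h i
  have hl1le := hl1.2 ⟨mul_pos (by positivity) hδk, w - u, hwu, hmem⟩
  refine ⟨k, ?_⟩
  rw [div_le_iff₀ (by positivity), mul_comm]
  exact_mod_cast hl1le

/-- **Lemma (barycentric inequality).** Let `S ⊆ ℝ^d` be a `d`-simplex with vertices
`v₁, …, v_{d+1}`, centroid at the origin and first successive minimum `λ₁`. Let `β`
assign to each point its (affine) barycentric coordinates with respect to `v`. If
`u, w ∈ S ∩ ℤ^d` are distinct, then `β(u)_k - β(w)_k ≥ λ₁/(d+1)` for some index `k`. -/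
theorem barycentric_coordinate_gap (d : ℕ) (v : Fin (d + 1) → (Fin d → ℝ))
    (hv : AffineIndependent ℝ v) (S : Set (Fin d → ℝ))
    (hS : S = convexHull ℝ (Set.range v))
    (hcent : (⨍ x in S, x) = (0 : Fin d → ℝ))
    (l1 : ℝ)
    (hl1 : IsLeast {l : ℝ | 0 < l ∧ ∃ z : Fin d → ℤ,
      (fun i => (z i : ℝ)) ≠ 0 ∧ (fun i => (z i : ℝ)) ∈ l • S} l1)
    (β : (Fin d → ℝ) → (Fin (d + 1) → ℝ))
    (hβ : ∀ x : Fin d → ℝ, (∑ i, β x i = 1) ∧ (∑ i, β x i • v i = x))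
    (u w : Fin d → ℤ)
    (hu : (fun i => (u i : ℝ)) ∈ S) (hw : (fun i => (w i : ℝ)) ∈ S)
    (huw : u ≠ w) :
    ∃ k : Fin (d + 1),
      l1 / ((d : ℝ) + 1) ≤ β (fun i => (u i : ℝ)) k - β (fun i => (w i : ℝ)) k :=
  barycentric_coordinate_gap_general d v hv S hS hcent l1 hl1 β hβ u w huw
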